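/- arXiv:1605.09223 — 5 statements merged into one kernel-verified Lean document; each statement's English description precedes it below -/
import Mathlib

section
/- Any polynomial P in n variables over F_q of total degree at most d can be written as P(αx + βy) = Σ_{m ∈ M^{d/2}} m(x) F_m(y) + Σ_{m ∈ M^{d/2}} m(y) G_m(x), where M^{d/2} is the set of monomials of total degree at most d/2 with each variable appearing to degree at most q-1, and F_m, G_m are polynomials. -/
/-!
Expanding `P(αx + βy)` monomial by monomial of `P` and by the binomial theorem in each variable
gives a linear combination of products `x^k y^l` with `|k| + |l| ≤ d`, each exponent at most
`q - 1`. Then `2|k| ≤ d` or `2|l| ≤ d`, so each product is of the form `m(x) F_m(y)` or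
`m(y) G_m(x)` with `m` a monomial of degree at most `d / 2`, and sums of such representations
are again representations of the same form.
-/

open Finset

namespace MvPolynomial

variable {R σ : Type*} [CommSemiring R] [Fintype σ] {q : ℕ}

def halfDegreeExponents (σ : Type*) [Fintype σ] [DecidableEq σ] (q d : ℕ) :
    Finset (σ → Fin q) :=
  univ.filter fun m => 2 * ∑ i, (m i : ℕ) ≤ d

def splitAlong (R : Type*) [CommSemiring R] (M : Finset (σ → Fin q)) :
    Submodule R ((σ → R) → (σ → R) → R) where
  carrier := {f | ∃ Fm Gm : (σ → Fin q) → MvPolynomial σ R, ∀ x y,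
    f x y = (∑ m ∈ M, (∏ i, x i ^ (m i : ℕ)) * eval y (Fm m)) +
      ∑ m ∈ M, (∏ i, y i ^ (m i : ℕ)) * eval x (Gm m)}
  zero_mem' := ⟨0, 0, fun x y => by simp⟩
  add_mem' := by
    rintro f g ⟨Ff, Gf, hf⟩ ⟨Fg, Gg, hg⟩
    refine ⟨Ff + Fg, Gf + Gg, fun x y => ?_⟩
    simp only [Pi.add_apply, hf, hg, map_add, mul_add, sum_add_distrib]
    ring
  smul_mem' := by
    rintro c f ⟨Fm, Gm, hf⟩
    refine ⟨c • Fm, c • Gm, fun x y => ?_⟩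
    simp only [Pi.smul_apply, smul_eq_mul, hf, smul_eval, mul_add, mul_sum]
    congr 1 <;> exact sum_congr rfl fun m _ => by ring

variable {M : Finset (σ → Fin q)}

theorem monomial_mul_eval_mem_splitAlong_left {m : σ → Fin q} (hm : m ∈ M)
    (p : MvPolynomial σ R) :
    (fun x y => (∏ i, x i ^ (m i : ℕ)) * eval y p) ∈ splitAlong R M :=
  ⟨fun m' => if m' = m then p else 0, 0, fun x y => by
    simp [apply_ite, hm]⟩

theorem monomial_mul_eval_mem_splitAlong_right {m : σ → Fin q} (hm : m ∈ M)
    (p : MvPolynomial σ R) :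
    (fun x y => (∏ i, y i ^ (m i : ℕ)) * eval x p) ∈ splitAlong R M :=
  ⟨0, fun m' => if m' = m then p else 0, fun x y => by
    simp [apply_ite, hm]⟩

variable [DecidableEq σ]

theorem prod_pow_mul_prod_pow_mem_splitAlong {d : ℕ} {k l : σ → ℕ} (hk : ∀ i, k i < q)
    (hl : ∀ i, l i < q) (hkl : ∑ i, k i + ∑ i, l i ≤ d) :
    (fun x y => (∏ i, x i ^ k i) * ∏ i, y i ^ l i) ∈
      splitAlong R (halfDegreeExponents σ q d) := by
  by_cases hsmall : 2 * ∑ i, k i ≤ d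
  · have hm : (fun i => (⟨k i, hk i⟩ : Fin q)) ∈ halfDegreeExponents σ q d := by
      simpa [halfDegreeExponents] using hsmall
    convert monomial_mul_eval_mem_splitAlong_left (R := R) hm (∏ i, X i ^ l i) using 3
    simp
  · have hm : (fun i => (⟨l i, hl i⟩ : Fin q)) ∈ halfDegreeExponents σ q d := by
      simp only [halfDegreeExponents, mem_filter, mem_univ, true_and]
      omega
    convert monomial_mul_eval_mem_splitAlong_right (R := R) hm (∏ i, X i ^ k i) using 3
    simp [mul_comm]

theorem prod_add_pow_eq_sum (a b : σ → R) (e : σ → ℕ) :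
    ∏ i, (a i + b i) ^ e i = ∑ k ∈ Fintype.piFinset fun i => range (e i + 1),
      ∏ i, a i ^ k i * b i ^ (e i - k i) * (e i).choose (k i) := by
  simp_rw [add_pow]
  exact prod_univ_sum _ _

theorem eval_mul_add_mul_mem_splitAlong {d : ℕ} (α β : R) {P : MvPolynomial σ R}
    (hdeg : P.totalDegree ≤ d) (hvar : ∀ i, P.degreeOf i < q) :
    (fun x y => eval (fun i => α * x i + β * y i) P) ∈
      splitAlong R (halfDegreeExponents σ q d) := by
  have hexpand : (fun x y => eval (fun i => α * x i + β * y i) P) =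
      ∑ e ∈ P.support, ∑ k ∈ Fintype.piFinset fun i => range (e i + 1),
        (P.coeff e * ∏ i, α ^ k i * β ^ (e i - k i) * (e i).choose (k i)) •
          fun (x y : σ → R) => (∏ i, x i ^ k i) * ∏ i, y i ^ (e i - k i) := by
    funext x y
    simp only [eval_eq', prod_add_pow_eq_sum, mul_sum, Finset.sum_apply, Pi.smul_apply,
      smul_eq_mul, mul_pow, prod_mul_distrib]
    exact sum_congr rfl fun e _ => sum_congr rfl fun k _ => by ring
  rw [hexpand]
  refine Submodule.sum_mem _ fun e he => Submodule.sum_mem _ fun k hkmem =>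
    Submodule.smul_mem _ _ ?_
  have hlt : ∀ i, e i < q := fun i => (monomial_le_degreeOf i he).trans_lt (hvar i)
  have hk : ∀ i, k i ≤ e i := fun i =>
    Nat.lt_succ_iff.1 (mem_range.1 (Fintype.mem_piFinset.1 hkmem i))
  refine prod_pow_mul_prod_pow_mem_splitAlong (fun i => (hk i).trans_lt (hlt i))
    (fun i => (Nat.sub_le _ _).trans_lt (hlt i)) ?_
  calc ∑ i, k i + ∑ i, (e i - k i) = ∑ i, e i := by
        rw [← sum_add_distrib]
        exact sum_congr rfl fun i _ => Nat.add_sub_cancel' (hk i)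
    _ ≤ d := by
        rw [← Finsupp.sum_fintype e (fun _ k => k) fun _ => rfl]
        exact (le_totalDegree he).trans hdeg

end MvPolynomial

open MvPolynomial in
theorem stmt_3_general (F : Type*) [Field F] [Fintype F] (n d : ℕ) (α β : F)
    (P : MvPolynomial (Fin n) F) (hdeg : P.totalDegree ≤ d)
    (hvar : ∀ i, P.degreeOf i ≤ Fintype.card F - 1) :
    ∃ Fm Gm : (Fin n → Fin (Fintype.card F)) → MvPolynomial (Fin n) F,
      ∀ x y : Fin n → F,
        MvPolynomial.eval (fun i => α * x i + β * y i) P =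
          (∑ m ∈ Finset.univ.filter (fun m : Fin n → Fin (Fintype.card F) =>
              2 * ∑ i, (m i : ℕ) ≤ d),
            (∏ i, x i ^ (m i : ℕ)) * MvPolynomial.eval y (Fm m)) +
          ∑ m ∈ Finset.univ.filter (fun m : Fin n → Fin (Fintype.card F) =>
              2 * ∑ i, (m i : ℕ) ≤ d),
            (∏ i, y i ^ (m i : ℕ)) * MvPolynomial.eval x (Gm m) :=
  eval_mul_add_mul_mem_splitAlong α β hdeg fun i =>
    Nat.lt_of_le_sub_one Fintype.card_pos (hvar i)

open MvPolynomial in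
/-- Any polynomial `P` in `n` variables over `F_q` of total degree at most `d` (with each
variable of degree at most `q - 1`) can be written as
`P(αx + βy) = ∑_{m ∈ M^{d/2}} m(x) F_m(y) + ∑_{m ∈ M^{d/2}} m(y) G_m(x)`,
where `M^{d/2}` is the set of monomials of total degree at most `d/2` with each exponent
at most `q - 1`. -/
theorem stmt_3 (F : Type*) [Field F] [Fintype F] [DecidableEq F] (n d : ℕ) (α β : F)
    (P : MvPolynomial (Fin n) F) (hdeg : P.totalDegree ≤ d)
    (hvar : ∀ i, P.degreeOf i ≤ Fintype.card F - 1) :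
    ∃ Fm Gm : (Fin n → Fin (Fintype.card F)) → MvPolynomial (Fin n) F,
      ∀ x y : Fin n → F,
        MvPolynomial.eval (fun i => α * x i + β * y i) P =
          (∑ m ∈ Finset.univ.filter (fun m : Fin n → Fin (Fintype.card F) =>
              2 * ∑ i, (m i : ℕ) ≤ d),
            (∏ i, x i ^ (m i : ℕ)) * MvPolynomial.eval y (Fm m)) +
          ∑ m ∈ Finset.univ.filter (fun m : Fin n → Fin (Fintype.card F) =>
              2 * ∑ i, (m i : ℕ) ≤ d),
            (∏ i, y i ^ (m i : ℕ)) * MvPolynomial.eval x (Gm m) :=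
  stmt_3_general F n d α β P hdeg hvar
end

section
/- Let A ⊆ F_q^n, α+β+γ = 0 in F_q, and let P be a polynomial of total degree at most d (with each variable of degree at most q-1) such that P(αa + βb) = 0 for all distinct a, b ∈ A. Then the number of a ∈ A with P(−γa) ≠ 0 is at most 2·m_{d/2}, where m_{d/2} is the number of monomials of total degree at most d/2 with each variable of degree at most q-1. -/
/-!
On `A' = {a ∈ A | P(-γa) ≠ 0}` the matrix `M a b = P(αa + βb)` is diagonal with nonzero
diagonal, so its rank is `#A'`. The polynomial `Q(x, y) = P(αx + βy)` in `2n` variables has total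
degree `≤ d` and degree `< q` in each variable, so each of its monomials `xᵏ yˡ` has `2|k| ≤ d` or
`2|l| ≤ d`. Grouping the monomials by their small half writes `M` as the sum of two matrices, each
of which factors through the `m_{d/2}` exponent vectors `e ∈ {0, …, q-1}ⁿ` with `2|e| ≤ d`; hence
`rank M ≤ 2 m_{d/2}`.
-/

open MvPolynomial Finset Matrix

namespace Matrix

variable {K : Type*} [Field K] {m n : Type*} [Fintype n]

theorem rank_add_le (A B : Matrix m n K) : (A + B).rank ≤ A.rank + B.rank := by
  have h : LinearMap.range (A + B).mulVecLin ≤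
      LinearMap.range A.mulVecLin ⊔ LinearMap.range B.mulVecLin := by
    rw [mulVecLin_add]
    rintro _ ⟨y, rfl⟩
    exact Submodule.mem_sup.2 ⟨A.mulVecLin y, ⟨y, rfl⟩, B.mulVecLin y, ⟨y, rfl⟩, rfl⟩
  exact (Submodule.finrank_mono h).trans (Submodule.finrank_add_le_finrank_add_finrank _ _)

theorem rank_le_card_of_eq_sum {ι κ : Type*} [DecidableEq κ] (M : Matrix m n K)
    (S : Finset ι) (L : Finset κ) (φ : ι → κ) (hφ : ∀ s ∈ S, φ s ∈ L)
    (u : κ → m → K) (v : ι → n → K) (hM : ∀ a b, M a b = ∑ s ∈ S, u (φ s) a * v s b) :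
    M.rank ≤ #L := by
  have hfactor :
      M = (of fun a (k : L) => u k a) * of fun (k : L) b => ∑ s ∈ S with φ s = k, v s b := by
    ext a b
    simp only [mul_apply, of_apply, mul_sum, hM]
    rw [sum_coe_sort L fun k => ∑ s ∈ S with φ s = k, u k a * v s b,
      ← sum_fiberwise_of_maps_to hφ]
    exact sum_congr rfl fun k _ => sum_congr rfl fun s hs => by rw [(mem_filter.1 hs).2]
  rw [hfactor]
  exact (rank_mul_le_left _ _).trans ((rank_le_card_width _).trans_eq (Fintype.card_coe L))

end Matrix

def smallExponents (σ : Type*) [Fintype σ] [DecidableEq σ] (q d : ℕ) : Finset (σ → ℕ) :=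
  (univ.filter fun m : σ → Fin q => 2 * ∑ i, (m i : ℕ) ≤ d).image fun m i => m i

namespace MvPolynomial

variable {R : Type*} [CommSemiring R] {σ τ : Type*}

theorem totalDegree_bind₁_le (f : σ → MvPolynomial τ R) (hf : ∀ i, (f i).totalDegree ≤ 1)
    (p : MvPolynomial σ R) : (bind₁ f p).totalDegree ≤ p.totalDegree := by
  conv_lhs => rw [p.as_sum, map_sum]
  refine totalDegree_finsetSum_le fun μ hμ => ?_
  rw [bind₁_monomial]
  refine (totalDegree_mul _ _).trans ?_
  rw [totalDegree_C, zero_add]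
  refine (totalDegree_finsetProd _ _).trans ((sum_le_sum fun i _ => ?_).trans (le_totalDegree hμ))
  exact (totalDegree_pow _ _).trans ((Nat.mul_le_mul_left _ (hf i)).trans_eq (mul_one _))

theorem degreeOf_bind₁_le (f : σ → MvPolynomial τ R) (j : τ) (k : σ)
    (hk : (f k).degreeOf j ≤ 1) (hf : ∀ i ≠ k, (f i).degreeOf j = 0) (p : MvPolynomial σ R) :
    (bind₁ f p).degreeOf j ≤ p.degreeOf k := by
  conv_lhs => rw [p.as_sum, map_sum]
  refine (degreeOf_sum_le _ _ _).trans (Finset.sup_le fun μ hμ => ?_)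
  rw [bind₁_monomial]
  refine (degreeOf_C_mul_le _ _ _).trans ((degreeOf_prod_le _ _ _).trans ?_)
  calc ∑ i ∈ μ.support, degreeOf j (f i ^ μ i)
      ≤ ∑ i ∈ μ.support, μ i * degreeOf j (f i) := sum_le_sum fun i _ => degreeOf_pow_le _ _ _
    _ = μ k * degreeOf j (f k) := sum_eq_single k (fun i _ hi => by rw [hf i hi, mul_zero])
        fun hk' => by rw [Finsupp.notMem_support_iff.1 hk', zero_mul]
    _ ≤ μ k := (Nat.mul_le_mul_left _ hk).trans_eq (mul_one _)
    _ ≤ p.degreeOf k := monomial_le_degreeOf k hμ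

noncomputable def substLinComb (α β : R) : MvPolynomial σ R →ₐ[R] MvPolynomial (σ ⊕ σ) R :=
  bind₁ fun i => C α * X (.inl i) + C β * X (.inr i)

@[simp]
theorem eval_substLinComb {K : Type*} [CommRing K] (α β : K) (P : MvPolynomial σ K)
    (x y : σ → K) :
    eval (Sum.elim x y) (substLinComb α β P) = eval (α • x + β • y) P := by
  change eval₂Hom (RingHom.id K) _ (bind₁ _ P) = _
  rw [eval₂Hom_bind₁]
  congr 2
  funext i
  simp

theorem totalDegree_substLinComb_le [Nontrivial R] (α β : R) (P : MvPolynomial σ R) :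
    (substLinComb α β P).totalDegree ≤ P.totalDegree := by
  refine totalDegree_bind₁_le _ (fun i => ?_) P
  refine (totalDegree_add _ _).trans (max_le ?_ ?_) <;>
  exact (totalDegree_mul _ _).trans (by simp [totalDegree_C, totalDegree_X])

theorem degreeOf_substLinComb_le [Nontrivial R] (α β : R) (P : MvPolynomial σ R) (j : σ ⊕ σ) :
    (substLinComb α β P).degreeOf j ≤ P.degreeOf (j.elim id id) := by
  have hle (i : σ) :
      (C α * X (.inl i) + C β * X (.inr i) : MvPolynomial (σ ⊕ σ) R).degreeOf j ≤
        max ((X (.inl i) : MvPolynomial (σ ⊕ σ) R).degreeOf j) ((X (.inr i)).degreeOf j) :=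
    (degreeOf_add_le _ _ _).trans (max_le_max (degreeOf_C_mul_le _ _ _) (degreeOf_C_mul_le _ _ _))
  unfold substLinComb
  apply degreeOf_bind₁_le
  · refine (hle _).trans ?_
    rcases j with j | j <;> simp [degreeOf_X_of_ne]
  · intro i hi
    refine Nat.le_zero.1 ((hle i).trans ?_)
    rcases j with j | j <;> simp only [Sum.elim_inl, Sum.elim_inr, id] at hi <;>
      simp [degreeOf_X_of_ne, Ne.symm hi]

theorem eval_sumElim [Fintype σ] [Fintype τ] (Q : MvPolynomial (σ ⊕ τ) R) (x : σ → R)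
    (y : τ → R) :
    eval (Sum.elim x y) Q =
      ∑ s ∈ Q.support, coeff s Q * ((∏ i, x i ^ s (.inl i)) * ∏ j, y j ^ s (.inr j)) := by
  simp only [eval_eq', Fintype.prod_sum_type, Sum.elim_inl, Sum.elim_inr]

theorem left_or_right_mem_smallExponents [Fintype σ] [DecidableEq σ] {q d : ℕ}
    {Q : MvPolynomial (σ ⊕ σ) R} (hdeg : Q.totalDegree ≤ d) (hvar : ∀ j, Q.degreeOf j < q)
    {s : σ ⊕ σ →₀ ℕ} (hs : s ∈ Q.support) :
    (fun i => s (.inl i)) ∈ smallExponents σ q d ∨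
      (fun i => s (.inr i)) ∈ smallExponents σ q d := by
  have hmem (g : σ → σ ⊕ σ) (h : 2 * ∑ i, s (g i) ≤ d) :
      (fun i => s (g i)) ∈ smallExponents σ q d :=
    mem_image.2 ⟨fun i => ⟨s (g i), (monomial_le_degreeOf _ hs).trans_lt (hvar _)⟩,
      mem_filter.2 ⟨mem_univ _, h⟩, rfl⟩
  have htot : ∑ i, s (.inl i) + ∑ i, s (.inr i) ≤ d := by
    rw [← Fintype.sum_sum_type, ← Finsupp.sum_fintype s (fun _ e => e) fun _ => rfl]
    exact (le_totalDegree hs).trans hdeg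
  by_cases h : 2 * ∑ i, s (.inl i) ≤ d
  · exact .inl (hmem _ h)
  · exact .inr (hmem _ (by omega))

theorem rank_eval_sumElim_le {K : Type*} [Field K] [Fintype σ] [Fintype τ] {m n : Type*}
    [Fintype m] [Fintype n] (Q : MvPolynomial (σ ⊕ τ) K) (x : m → σ → K) (y : n → τ → K)
    (L₁ : Finset (σ → ℕ)) (L₂ : Finset (τ → ℕ))
    (hQ : ∀ s ∈ Q.support, (fun i => s (.inl i)) ∈ L₁ ∨ (fun j => s (.inr j)) ∈ L₂) :
    (of fun a b => eval (Sum.elim (x a) (y b)) Q).rank ≤ #L₁ + #L₂ := by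
  set SL := Q.support.filter fun s => (fun i => s (.inl i)) ∈ L₁
  set SR := Q.support.filter fun s => (fun i => s (.inl i)) ∉ L₁
  let monomials : Finset (σ ⊕ τ →₀ ℕ) → Matrix m n K := fun S => of fun a b =>
    ∑ s ∈ S, coeff s Q * ((∏ i, x a i ^ s (.inl i)) * ∏ j, y b j ^ s (.inr j))
  have hsplit : (of fun a b => eval (Sum.elim (x a) (y b)) Q) = monomials SL + monomials SR := by
    ext a b
    simp only [of_apply, Matrix.add_apply, eval_sumElim, monomials, SL, SR,
      sum_filter_add_sum_filter_not]
  have hL : (monomials SL).rank ≤ #L₁ :=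
    rank_le_card_of_eq_sum _ SL L₁ (fun s i => s (.inl i)) (fun s hs => (mem_filter.1 hs).2)
      (fun e a => ∏ i, x a i ^ e i) (fun s b => coeff s Q * ∏ j, y b j ^ s (.inr j))
      fun a b => sum_congr rfl fun s _ => by simp only; ring
  have hR : (monomials SR).rank ≤ #L₂ := by
    rw [← rank_transpose]
    exact rank_le_card_of_eq_sum _ SR L₂ (fun s j => s (.inr j))
      (fun s hs => (hQ s (mem_filter.1 hs).1).resolve_left (mem_filter.1 hs).2)
      (fun e b => ∏ j, y b j ^ e j) (fun s a => coeff s Q * ∏ i, x a i ^ s (.inl i))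
      fun b a => sum_congr rfl fun s _ => by simp only; ring
  rw [hsplit]
  exact (rank_add_le _ _).trans (add_le_add hL hR)

end MvPolynomial

theorem stmt_4_general (F : Type*) [Field F] [Fintype F] [DecidableEq F] (n : ℕ)
    (d : ℕ) (α β γ : F) (hsum : α + β + γ = 0)
    (A : Finset (Fin n → F)) (P : MvPolynomial (Fin n) F)
    (hdeg : P.totalDegree ≤ d) (hvar : ∀ i, P.degreeOf i ≤ Fintype.card F - 1)
    (hvanish : ∀ a ∈ A, ∀ b ∈ A, a ≠ b → MvPolynomial.eval (α • a + β • b) P = 0) :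
    (A.filter fun a => MvPolynomial.eval (-γ • a) P ≠ 0).card ≤
      2 * (Finset.univ.filter (fun m : Fin n → Fin (Fintype.card F) =>
        2 * ∑ i, (m i : ℕ) ≤ d)).card := by
  set A' := A.filter fun a => eval (-γ • a) P ≠ 0
  set Q := substLinComb α β P
  set E := smallExponents (Fin n) (Fintype.card F) d
  have hdiag : (of fun a b : A' => eval (Sum.elim (a : Fin n → F) b) Q) =
      diagonal fun a : A' => eval (-γ • (a : Fin n → F)) P := by
    ext a b
    rw [of_apply, eval_substLinComb]
    rcases eq_or_ne a b with rfl | hab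
    · rw [diagonal_apply_eq, ← add_smul, eq_neg_of_add_eq_zero_left hsum]
    · rw [diagonal_apply_ne _ hab]
      exact hvanish _ (mem_filter.1 a.2).1 _ (mem_filter.1 b.2).1 (Subtype.coe_injective.ne hab)
  have hsupp (s) (hs : s ∈ Q.support) := left_or_right_mem_smallExponents
    ((totalDegree_substLinComb_le α β P).trans hdeg)
    (fun j => (degreeOf_substLinComb_le α β P j).trans_lt
      (Nat.lt_of_le_sub_one Fintype.card_pos (hvar _))) hs
  calc #A' = (diagonal fun a : A' => eval (-γ • (a : Fin n → F)) P).rank := by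
        rw [rank_diagonal, ← Fintype.card_coe A']
        exact (Fintype.card_congr (.subtypeUnivEquiv fun a : A' => (mem_filter.1 a.2).2)).symm
    _ ≤ #E + #E := hdiag ▸ rank_eval_sumElim_le Q (fun a : A' => (a : Fin n → F))
        (fun b : A' => (b : Fin n → F)) E E hsupp
    _ ≤ _ := by rw [← two_mul]; exact Nat.mul_le_mul_left 2 card_image_le

/-- Croot–Lev–Pach lemma over `F_q`: if `α + β + γ = 0` and `P` is a polynomial of total
degree at most `d` (each variable of degree at most `q - 1`) with `P(αa + βb) = 0` for all
distinct `a, b ∈ A`, then the number of `a ∈ A` with `P(-γa) ≠ 0` is at most `2 * m_{d/2}`. -/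
theorem stmt_4 (F : Type*) [Field F] [Fintype F] [DecidableEq F] (n : ℕ) (hn : 0 < n)
    (d : ℕ) (hd : d ≤ (Fintype.card F - 1) * n) (α β γ : F) (hsum : α + β + γ = 0)
    (A : Finset (Fin n → F)) (P : MvPolynomial (Fin n) F)
    (hdeg : P.totalDegree ≤ d) (hvar : ∀ i, P.degreeOf i ≤ Fintype.card F - 1)
    (hvanish : ∀ a ∈ A, ∀ b ∈ A, a ≠ b → MvPolynomial.eval (α • a + β • b) P = 0) :
    (A.filter fun a => MvPolynomial.eval (-γ • a) P ≠ 0).card ≤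
      2 * (Finset.univ.filter (fun m : Fin n → Fin (Fintype.card F) =>
        2 * ∑ i, (m i : ℕ) ≤ d)).card :=
  stmt_4_general F n d α β γ hsum A P hdeg hvar hvanish
end

section
/- Let V be a subspace of functions F_q^n → F_q, viewed as functions, and let P ∈ V have support of maximal cardinality among elements of V. Then |supp(P)| ≥ dim V. -/
/-! If `|supp P| < dim V`, restriction to `supp P` is not injective on `V`, so some nonzero
`Q ∈ V` vanishes on `supp P`. Then `P + Q ∈ V` has support `supp P ⊔ supp Q`, which is
strictly larger than `supp P`. -/

open Finset

section

variable {α : Type*}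

theorem finrank_le_card_of_vanishing_imp_eq_zero {K : Type*} [DivisionRing K]
    (V : Submodule K (α → K)) (s : Finset α) (h : ∀ Q ∈ V, (∀ a ∈ s, Q a = 0) → Q = 0) :
    Module.finrank K V ≤ #s := by
  let restrict : V →ₗ[K] (s → K) := LinearMap.funLeft K K (↑) ∘ₗ V.subtype
  have hinj : Function.Injective restrict := by
    rw [← LinearMap.ker_eq_bot, LinearMap.ker_eq_bot']
    intro Q hQ
    exact Subtype.ext <| h Q Q.2 fun a ha => congrFun hQ ⟨a, ha⟩
  calc Module.finrank K V ≤ Module.finrank K (s → K) :=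
        LinearMap.finrank_le_finrank_of_injective hinj
    _ = #s := by simp

variable [Fintype α]

theorem card_support_add_of_disjoint {M : Type*} [AddZeroClass M] [DecidableEq M]
    {P Q : α → M} (h : ∀ a, P a ≠ 0 → Q a = 0) :
    #{a | (P + Q) a ≠ 0} = #{a | P a ≠ 0} + #{a | Q a ≠ 0} := by
  classical
  have hsupp : univ.filter (fun a => (P + Q) a ≠ 0) =
      univ.filter (fun a => P a ≠ 0) ∪ univ.filter (fun a => Q a ≠ 0) := by
    ext a
    by_cases hP : P a = 0 <;> simp_all
  rw [hsupp, card_union_of_disjoint]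
  exact disjoint_filter.2 fun a _ hP hQ => hQ (h a hP)

theorem finrank_le_card_support_of_maximal {K : Type*} [DivisionRing K] [DecidableEq K]
    {V : Submodule K (α → K)} {P : α → K} (hP : P ∈ V)
    (hmax : ∀ Q ∈ V, #{a | Q a ≠ 0} ≤ #{a | P a ≠ 0}) :
    Module.finrank K V ≤ #{a | P a ≠ 0} := by
  refine finrank_le_card_of_vanishing_imp_eq_zero V _ fun Q hQ hQs => ?_
  have hdisj : ∀ a, P a ≠ 0 → Q a = 0 := fun a ha => hQs a (by simpa using ha)
  have hgrow := card_support_add_of_disjoint hdisj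
  have hQ0 : #{a | Q a ≠ 0} = 0 := by
    have := hmax (P + Q) (V.add_mem hP hQ)
    omega
  ext a
  simpa using filter_eq_empty_iff.1 (card_eq_zero.1 hQ0) (mem_univ a)

end

/-- If `V` is a subspace of functions `F_q^n → F_q` and `P ∈ V` has support of maximal
cardinality among elements of `V`, then `|supp P| ≥ dim V`. -/
theorem stmt_7 (F : Type*) [Field F] [Fintype F] [DecidableEq F] (n : ℕ)
    (V : Submodule F ((Fin n → F) → F)) (P : (Fin n → F) → F) (hP : P ∈ V)
    (hmax : ∀ Q ∈ V, (Finset.univ.filter fun a => Q a ≠ 0).card ≤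
      (Finset.univ.filter fun a => P a ≠ 0).card) :
    Module.finrank F V ≤ (Finset.univ.filter fun a => P a ≠ 0).card :=
  finrank_le_card_support_of_maximal hP hmax
end

section
/- If A ⊆ (Z/3Z)^n contains no three-term arithmetic progression, then |A| = O(2.756^n). -/
/-!
The polynomial method of Croot–Lev–Pach and Ellenberg–Gijswijt. Let `m_d` count the monomials in
`n` variables with all exponents `≤ 2` and total degree `≤ d`. Expanding `f (x + y)` for a
polynomial `f` of degree `≤ d`, every monomial of the expansion has a factor of degree `≤ d / 2` in
`x` or in `y`, so the matrix `(f (a + b))_{a, b ∈ A}` has rank `≤ 2 m_{d/2}`. If `A` has no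
three-term progression, then `a + b ∉ 2 • A` for `a ≠ b`, so for `f` vanishing off `2 • A` this
matrix is diagonal. Such `f` form a space of dimension `≥ m_d - (3 ^ n - |A|)` whose elements have
at most `2 m_{d/2}` nonzero values, which bounds its dimension. With `d = ⌊4n/3⌋` and the symmetry
`e ↦ 2 - e` of exponents this gives `|A| ≤ 3 m_{2n/3}`, and the Chernoff-type bound
`m_{2n/3} ≤ ((1 + z³ + z⁶) / z²) ^ n`, `0 < z ≤ 1`, is below `2.756 ^ n` at `z = 0.84`.
-/

open Finset

def reducedExponents (n r d : ℕ) : Finset (Fin n → ℕ) :=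
  {e ∈ Fintype.piFinset fun _ => range (r + 1) | ∑ i, e i ≤ d}

def monomialFn {K : Type*} [CommSemiring K] {n : ℕ} (e : Fin n → ℕ) (x : Fin n → K) : K :=
  ∏ i, x i ^ e i

def reducedPolyFns (K : Type*) [Field K] (n r d : ℕ) : Submodule K ((Fin n → K) → K) :=
  Submodule.span K (Set.range fun e : reducedExponents n r d => monomialFn e.1)

section LinearAlgebra

variable {K : Type*} [Field K]

theorem Matrix.rank_le_card_of_eq_sum_mul {m n ι : Type*} [Fintype m] [Fintype n] [Fintype ι]
    (M : Matrix m n K) (u : m → ι → K) (v : ι → n → K) (h : ∀ a b, M a b = ∑ i, u a i * v i b) :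
    M.rank ≤ Fintype.card ι := by
  have hM : M = of u * of v := by ext a b; simp [Matrix.mul_apply, h]
  rw [hM]
  exact (rank_mul_le_left _ _).trans (rank_le_card_width _)

theorem Submodule.finrank_le_of_card_support_le {ι : Type*} [Fintype ι] [DecidableEq K]
    (S : Submodule K (ι → K)) {k : ℕ} (hS : ∀ h ∈ S, #{i | h i ≠ 0} ≤ k) :
    Module.finrank K S ≤ k := by
  classical
  obtain ⟨T, hTS, hTmax⟩ := exists_max_image
    ({T | ∃ h ∈ S, ({i | h i ≠ 0} : Finset ι) = T} : Finset (Finset ι)) card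
    ⟨∅, mem_filter.mpr ⟨mem_univ _, 0, S.zero_mem, by simp⟩⟩
  obtain ⟨h₀, hh₀, rfl⟩ := (mem_filter.mp hTS).2
  -- a vector of `S` vanishing on the support of `h₀` would enlarge that support when added to it
  have hinj : Function.Injective ((LinearMap.funLeft K K ((↑) : {i // h₀ i ≠ 0} → ι)).comp
      S.subtype) := by
    rw [← LinearMap.ker_eq_bot, LinearMap.ker_eq_bot']
    intro h hh
    by_contra hne
    obtain ⟨x, hx⟩ : ∃ x, h.1 x ≠ 0 := by
      by_contra! hall
      exact hne (Subtype.ext (funext hall))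
    have hvan : ∀ i, h₀ i ≠ 0 → h.1 i = 0 := fun i hi => congrFun hh ⟨i, hi⟩
    have hx₀ : h₀ x = 0 := by_contra fun hx₀ => hx (hvan x hx₀)
    have hsub : insert x ({i | h₀ i ≠ 0} : Finset ι) ⊆ ({i | (h₀ + h.1) i ≠ 0} : Finset ι) := by
      intro i hi
      rcases mem_insert.mp hi with rfl | hi
      · simp [hx₀, hx]
      · have hi : h₀ i ≠ 0 := (mem_filter.mp hi).2
        simp [hi, hvan i hi]
    have := hTmax _ (mem_filter.mpr ⟨mem_univ _, h₀ + h.1, S.add_mem hh₀ h.2, rfl⟩)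
    have := card_le_card hsub
    rw [card_insert_of_notMem (by simp [hx₀])] at this
    omega
  calc Module.finrank K S ≤ Module.finrank K ({i // h₀ i ≠ 0} → K) :=
        LinearMap.finrank_le_finrank_of_injective hinj
    _ = #{i | h₀ i ≠ 0} := by rw [Module.finrank_fintype_fun_eq_card, Fintype.card_subtype]
    _ ≤ k := hS h₀ hh₀

theorem card_le_finrank_ker_funLeft_compl {ι : Type*} [Fintype ι] [DecidableEq ι] (D : Finset ι) :
    #D ≤ Module.finrank K (LinearMap.ker (LinearMap.funLeft K K ((↑) : (Dᶜ : Finset ι) → ι))) := by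
  set φ := LinearMap.funLeft K K ((↑) : (Dᶜ : Finset ι) → ι)
  have hrange := Submodule.finrank_le (LinearMap.range φ)
  have hrank := LinearMap.finrank_range_add_finrank_ker φ
  simp only [Module.finrank_fintype_fun_eq_card, Fintype.card_coe, card_compl] at hrange hrank
  have := card_le_univ D
  omega

end LinearAlgebra

section Monomials

variable {K : Type*} {n r d : ℕ}

theorem mem_reducedExponents {e : Fin n → ℕ} :
    e ∈ reducedExponents n r d ↔ (∀ i, e i ≤ r) ∧ ∑ i, e i ≤ d := by
  simp [reducedExponents]

theorem reducedExponents_mono {d d' : ℕ} (h : d ≤ d') :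
    reducedExponents n r d ⊆ reducedExponents n r d' :=
  monotone_filter_right _ fun _ _ he => he.trans h

theorem mem_reducedExponents_half_or_sub {e p : Fin n → ℕ} (he : e ∈ reducedExponents n r d)
    (hp : p ≤ e) :
    p ∈ reducedExponents n r (d / 2) ∨ e - p ∈ reducedExponents n r (d / 2) := by
  simp only [mem_reducedExponents] at he ⊢
  have hsum : ∑ i, (e - p) i + ∑ i, p i = ∑ i, e i := by
    rw [← sum_add_distrib]
    exact sum_congr rfl fun i _ => Nat.sub_add_cancel (hp i)
  by_cases hpd : ∑ i, p i ≤ d / 2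
  · exact .inl ⟨fun i => (hp i).trans (he.1 i), hpd⟩
  · exact .inr ⟨fun i => (Nat.sub_le _ _).trans (he.1 i), by omega⟩

theorem monomialFn_add [CommSemiring K] (e : Fin n → ℕ) (x y : Fin n → K) :
    monomialFn e (x + y) = ∑ p ∈ Fintype.piFinset fun i => range (e i + 1),
      (∏ i, ((e i).choose (p i) : K)) * monomialFn p x * monomialFn (e - p) y := by
  simp_rw [monomialFn, Pi.add_apply, add_pow, prod_univ_sum, Pi.sub_apply, ← prod_mul_distrib]
  refine sum_congr rfl fun p _ => prod_congr rfl fun i _ => ?_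
  ring

end Monomials

section FiniteField

-- `K : Type`: `MvPolynomial.eq_zero_of_eval_eq_zero` needs `K` in the universe of `Fin n`.
variable {K : Type} [Field K] [Fintype K] {n r d : ℕ}

-- Evaluation is injective on polynomials whose exponents are all `< card K`.
theorem linearIndependent_monomialFn (s : Finset (Fin n → ℕ))
    (hs : ∀ e ∈ s, ∀ i, e i < Fintype.card K) :
    LinearIndependent K (fun e : s => monomialFn (K := K) e.1) := by
  classical
  set b := MvPolynomial.basisMonomials (Fin n) K ∘ Finsupp.equivFunOnFinite.symm ∘
    ((↑) : s → Fin n → ℕ)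
  have hb : LinearIndependent K b := (MvPolynomial.basisMonomials _ K).linearIndependent.comp _
    (Finsupp.equivFunOnFinite.symm.injective.comp Subtype.val_injective)
  have hspan : Submodule.span K (Set.range b) ≤
      MvPolynomial.restrictDegree (Fin n) K (Fintype.card K - 1) := by
    rw [Submodule.span_le]
    rintro _ ⟨e, rfl⟩
    rw [SetLike.mem_coe, MvPolynomial.mem_restrictDegree]
    intro t ht i
    simp only [b, Function.comp_apply, MvPolynomial.coe_basisMonomials,
      MvPolynomial.support_monomial, if_neg one_ne_zero, mem_singleton] at ht
    subst ht
    exact Nat.le_sub_one_of_lt (hs e e.2 i)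
  have hdisj := Submodule.disjoint_def.mpr fun p hp (hker : p ∈ LinearMap.ker
      (MvPolynomial.evalₗ K (Fin n))) =>
    MvPolynomial.eq_zero_of_eval_eq_zero _ _ p (fun x => congrFun hker x) (hspan hp)
  have hfn : (fun e : s => monomialFn (K := K) e.1) = MvPolynomial.evalₗ K (Fin n) ∘ b := by
    funext e x
    simp [b, MvPolynomial.eval_monomial, Finsupp.prod_fintype, monomialFn]
  rw [hfn]
  exact hb.map hdisj

theorem finrank_reducedPolyFns (hr : r < Fintype.card K) :
    Module.finrank K (reducedPolyFns K n r d) = #(reducedExponents n r d) := by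
  rw [reducedPolyFns, finrank_span_eq_card, Fintype.card_coe]
  exact linearIndependent_monomialFn _ fun e he i =>
    ((mem_reducedExponents.mp he).1 i).trans_lt hr

end FiniteField

section SumProdSpan

variable {K α ι : Type*} [Field K]

def sumProdSpan (φ : ι → α → K) (s : Finset ι) : Submodule K (α → α → K) where
  carrier := {F | ∃ u v : ι → α → K, ∀ x y, F x y = ∑ i ∈ s, (φ i x * u i y + v i x * φ i y)}
  zero_mem' := ⟨0, 0, by simp⟩
  add_mem' := by
    rintro F G ⟨u, v, hF⟩ ⟨u', v', hG⟩
    refine ⟨u + u', v + v', fun x y => ?_⟩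
    simp only [Pi.add_apply, hF, hG, ← sum_add_distrib]
    exact sum_congr rfl fun i _ => by ring
  smul_mem' := by
    rintro c F ⟨u, v, hF⟩
    refine ⟨c • u, c • v, fun x y => ?_⟩
    simp only [Pi.smul_apply, smul_eq_mul, hF, mul_sum]
    exact sum_congr rfl fun i _ => by ring

variable {φ : ι → α → K} {s : Finset ι} {i : ι}

theorem mul_left_mem_sumProdSpan [DecidableEq ι] (hi : i ∈ s) (h : α → K) :
    (fun x y => φ i x * h y) ∈ sumProdSpan φ s :=
  ⟨fun j => if j = i then h else 0, 0, fun x y => by simp [ite_apply, mul_ite, hi]⟩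

theorem mul_right_mem_sumProdSpan [DecidableEq ι] (hi : i ∈ s) (h : α → K) :
    (fun x y => h x * φ i y) ∈ sumProdSpan φ s :=
  ⟨0, fun j => if j = i then h else 0, fun x y => by simp [ite_apply, ite_mul, hi]⟩

theorem rank_le_of_mem_sumProdSpan {F : α → α → K} (hF : F ∈ sumProdSpan φ s) (A : Finset α) :
    (Matrix.of fun a b : A => F a b).rank ≤ 2 * #s := by
  obtain ⟨u, v, hF⟩ := hF
  calc _ ≤ Fintype.card (s ⊕ s) :=
        Matrix.rank_le_card_of_eq_sum_mul _
          (fun a : A => Sum.elim (fun i : s => φ i a) (fun i => v i a))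
          (Sum.elim (fun i (b : A) => u i b) (fun i b => φ i b)) fun a b => by
            simp only [Matrix.of_apply, hF, Fintype.sum_sum_type, Sum.elim_inl, Sum.elim_inr,
              sum_coe_sort s (fun i => φ i a * u i b), sum_coe_sort s (fun i => v i a * φ i b),
              sum_add_distrib]
    _ = 2 * #s := by simp [two_mul]

end SumProdSpan

section CrootLevPach

variable {K : Type*} [Field K] {n r d : ℕ}

theorem comp_add_mem_sumProdSpan {f : (Fin n → K) → K} (hf : f ∈ reducedPolyFns K n r d) :
    (fun x y => f (x + y)) ∈ sumProdSpan monomialFn (reducedExponents n r (d / 2)) := by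
  induction hf using Submodule.span_induction with
  | mem f hf =>
    obtain ⟨⟨e, he⟩, rfl⟩ := hf
    have hexp : (fun x y => monomialFn e (x + y)) = ∑ p ∈ Fintype.piFinset fun i => range (e i + 1),
        fun x y => (∏ i, ((e i).choose (p i) : K)) * monomialFn p x * monomialFn (e - p) y := by
      ext x y
      simp [monomialFn_add, Finset.sum_apply]
    rw [hexp]
    refine sum_mem fun p hp => ?_
    have hpe : p ≤ e := fun i => Nat.lt_succ_iff.mp (mem_range.mp (Fintype.mem_piFinset.mp hp i))
    rcases mem_reducedExponents_half_or_sub he hpe with hlow | hlow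
    · convert mul_left_mem_sumProdSpan hlow
        (fun y => (∏ i, ((e i).choose (p i) : K)) * monomialFn (e - p) y) using 1
      ext x y
      ring
    · convert mul_right_mem_sumProdSpan hlow
        (fun x => (∏ i, ((e i).choose (p i) : K)) * monomialFn p x) using 1
  | zero => exact zero_mem _
  | add f g _ _ hf hg => exact add_mem hf hg
  | smul c f _ hf => exact Submodule.smul_mem _ c hf

theorem card_filter_add_self_ne_zero_le [DecidableEq K] {f : (Fin n → K) → K}
    (hf : f ∈ reducedPolyFns K n r d) (A : Finset (Fin n → K))
    (hA : ∀ a ∈ A, ∀ b ∈ A, a ≠ b → f (a + b) = 0) :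
    #{a ∈ A | f (a + a) ≠ 0} ≤ 2 * #(reducedExponents n r (d / 2)) := by
  have hdiag : (Matrix.of fun a b : A => f (a + b)) = Matrix.diagonal fun a : A => f (a + a) := by
    ext a b
    rcases eq_or_ne a b with rfl | hab
    · simp
    · simpa [hab] using hA a a.2 b b.2 (Subtype.coe_ne_coe.mpr hab)
  have := rank_le_of_mem_sumProdSpan (comp_add_mem_sumProdSpan hf) A
  rwa [hdiag, Matrix.rank_diagonal, Fintype.card_subtype, univ_eq_attach,
    filter_attach (fun a => f (a + a) ≠ 0), card_map,
    card_attach] at this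

end CrootLevPach

section CapSet

variable {K : Type} [Field K] [Fintype K] [DecidableEq K] {n : ℕ}

theorem ThreeAPFree.card_add_card_reducedExponents_le (h2 : (2 : K) ≠ 0)
    {A : Finset (Fin n → K)} (hA : ThreeAPFree (A : Set (Fin n → K))) (d : ℕ) :
    #A + #(reducedExponents n (Fintype.card K - 1) d) ≤
      Fintype.card K ^ n + 2 * #(reducedExponents n (Fintype.card K - 1) (d / 2)) := by
  set D := A.image fun a => a + a
  have hD : #D = #A := card_image_of_injective _ fun a b hab =>
    smul_right_injective (Fin n → K) h2 (by simpa only [two_smul] using hab)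
  have hAD : ∀ a ∈ A, ∀ b ∈ A, a ≠ b → a + b ∉ D := by
    intro a ha b hb hab hmem
    obtain ⟨c, hc, hcab⟩ := mem_image.mp hmem
    obtain rfl := hA ha hc hb hcab.symm
    exact hab (add_left_cancel hcab)
  set V := reducedPolyFns K n (Fintype.card K - 1) d
  set U := LinearMap.ker (LinearMap.funLeft K K ((↑) : (Dᶜ : Finset (Fin n → K)) → Fin n → K))
  have hV : Module.finrank K V = #(reducedExponents n (Fintype.card K - 1) d) :=
    finrank_reducedPolyFns (Nat.sub_lt Fintype.card_pos one_pos)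
  have hU : #D ≤ Module.finrank K U := card_le_finrank_ker_funLeft_compl D
  have hsup : Module.finrank K ↥(V ⊔ U) ≤ Fintype.card K ^ n := by
    simpa using Submodule.finrank_le (V ⊔ U)
  have hinf : Module.finrank K ↥(V ⊓ U) ≤
      2 * #(reducedExponents n (Fintype.card K - 1) (d / 2)) := by
    refine Submodule.finrank_le_of_card_support_le _ fun f hf => ?_
    obtain ⟨hfV, hfU⟩ := Submodule.mem_inf.mp hf
    have hoff : ∀ x ∉ D, f x = 0 := fun x hx =>
      congrFun (LinearMap.mem_ker.mp hfU) ⟨x, mem_compl.mpr hx⟩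
    calc #{x | f x ≠ 0} ≤ #({a ∈ A | f (a + a) ≠ 0}.image fun a => a + a) := by
          refine card_le_card fun x hx => ?_
          have hx : f x ≠ 0 := (mem_filter.mp hx).2
          obtain ⟨a, ha, rfl⟩ := mem_image.mp (not_imp_comm.mp (hoff x) hx)
          exact mem_image_of_mem _ (mem_filter.mpr ⟨ha, hx⟩)
      _ ≤ #{a ∈ A | f (a + a) ≠ 0} := card_image_le
      _ ≤ _ := card_filter_add_self_ne_zero_le hfV A fun a ha b hb hab =>
          hoff _ (hAD a ha b hb hab)
  have := Submodule.finrank_sup_add_finrank_inf_eq V U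
  omega

end CapSet

theorem pow_le_card_reducedExponents_add_card (n r d : ℕ) :
    (r + 1) ^ n ≤ #(reducedExponents n r d) + #(reducedExponents n r (r * n - d - 1)) := by
  -- `e ↦ r - e` maps the exponents of degree `> d` into those of degree `< r * n - d`
  have hsub : Fintype.piFinset (fun _ : Fin n => range (r + 1)) ⊆ reducedExponents n r d ∪
      (reducedExponents n r (r * n - d - 1)).image fun e i => r - e i := by
    intro e he
    have her : ∀ i, e i ≤ r := fun i =>
      Nat.lt_succ_iff.mp (mem_range.mp (Fintype.mem_piFinset.mp he i))
    by_cases hd : ∑ i, e i ≤ d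
    · exact mem_union_left _ (mem_reducedExponents.mpr ⟨her, hd⟩)
    · have hsum : ∑ i, (r - e i) + ∑ i, e i = r * n := by
        rw [← sum_add_distrib]
        simp [Nat.sub_add_cancel (her _), mul_comm]
      refine mem_union_right _ (mem_image.mpr ⟨fun i => r - e i, ?_, ?_⟩)
      · exact mem_reducedExponents.mpr ⟨fun i => Nat.sub_le _ _, by omega⟩
      · exact funext fun i => Nat.sub_sub_self (her i)
  calc (r + 1) ^ n = #(Fintype.piFinset fun _ : Fin n => range (r + 1)) := by simp
    _ ≤ _ := card_le_card hsub
    _ ≤ _ := card_union_le _ _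
    _ ≤ _ := add_le_add_right card_image_le _

theorem card_reducedExponents_mul_pow_le {y : ℝ} (hy0 : 0 ≤ y) (hy1 : y ≤ 1) (n r d : ℕ) :
    #(reducedExponents n r d) * y ^ d ≤ (∑ j ∈ range (r + 1), y ^ j) ^ n := by
  calc #(reducedExponents n r d) * y ^ d = ∑ e ∈ reducedExponents n r d, y ^ d := by
        rw [sum_const, nsmul_eq_mul]
    _ ≤ ∑ e ∈ reducedExponents n r d, y ^ ∑ i, e i :=
        sum_le_sum fun e he => pow_le_pow_of_le_one hy0 hy1 (mem_reducedExponents.mp he).2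
    _ ≤ ∑ e ∈ Fintype.piFinset fun _ : Fin n => range (r + 1), y ^ ∑ i, e i :=
        sum_le_sum_of_subset_of_nonneg (filter_subset _ _) fun _ _ _ => by positivity
    _ = (∑ j ∈ range (r + 1), y ^ j) ^ n := by
        rw [← Fin.prod_const, prod_univ_sum]
        simp [prod_pow_eq_pow_sum]

theorem card_reducedExponents_two_le {n k : ℕ} (hk : 3 * k ≤ 2 * n) :
    (#(reducedExponents n 2 k) : ℝ) ≤ 2.756 ^ n := by
  set z : ℝ := 0.84
  have hz : 0 < z := by norm_num
  have hchernoff :=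
    card_reducedExponents_mul_pow_le (y := z ^ 3) (by positivity) (by norm_num) n 2 k
  have hzk : z ^ (2 * n) ≤ (z ^ 3) ^ k := by
    rw [← pow_mul]
    exact pow_le_pow_of_le_one hz.le (by norm_num) hk
  calc (#(reducedExponents n 2 k) : ℝ)
      ≤ (∑ j ∈ range 3, (z ^ 3) ^ j) ^ n / z ^ (2 * n) := by
        rw [le_div_iff₀ (by positivity)]
        exact (mul_le_mul_of_nonneg_left hzk (by positivity)).trans hchernoff
    _ = ((1 + z ^ 3 + z ^ 6) / z ^ 2) ^ n := by
        rw [div_pow, pow_mul]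
        simp [sum_range_succ, ← pow_mul]
    _ ≤ 2.756 ^ n := pow_le_pow_left₀ (by positivity) (by norm_num [z]) n

theorem ThreeAPFree.card_le_three_mul_card_reducedExponents {n : ℕ}
    {A : Finset (Fin n → ZMod 3)} (hA : ThreeAPFree (A : Set (Fin n → ZMod 3))) :
    #A ≤ 3 * #(reducedExponents n 2 (2 * n / 3)) := by
  have hpoly : #A + #(reducedExponents n 2 (4 * n / 3)) ≤
      3 ^ n + 2 * #(reducedExponents n 2 (4 * n / 3 / 2)) := by
    simpa [ZMod.card] using hA.card_add_card_reducedExponents_le (by decide) (4 * n / 3)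
  have hcount : 3 ^ n ≤ #(reducedExponents n 2 (4 * n / 3)) +
      #(reducedExponents n 2 (2 * n - 4 * n / 3 - 1)) :=
    pow_le_card_reducedExponents_add_card n 2 (4 * n / 3)
  have hlow := card_le_card (reducedExponents_mono (n := n) (r := 2)
    (show 4 * n / 3 / 2 ≤ 2 * n / 3 by omega))
  have hhigh := card_le_card (reducedExponents_mono (n := n) (r := 2)
    (show 2 * n - 4 * n / 3 - 1 ≤ 2 * n / 3 by omega))
  omega

/-- Cap set bound: if `A ⊆ (ℤ/3ℤ)^n` has no three-term arithmetic progression, then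
`|A| = O(2.756^n)`. -/
theorem stmt_15 :
    ∃ C : ℝ, ∀ n : ℕ, ∀ A : Finset (Fin n → ZMod 3),
      (∀ a ∈ A, ∀ b ∈ A, ∀ c ∈ A, a + c = (2 : ZMod 3) • b → a = b ∧ b = c) →
      (A.card : ℝ) ≤ C * 2.756 ^ n := by
  refine ⟨3, fun n A hA => ?_⟩
  have hAP : ThreeAPFree (A : Set (Fin n → ZMod 3)) := fun a ha b hb c hc habc =>
    (hA a ha b hb c hc (by rwa [two_smul])).1
  calc (#A : ℝ) ≤ 3 * #(reducedExponents n 2 (2 * n / 3)) := by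
        exact_mod_cast hAP.card_le_three_mul_card_reducedExponents
    _ ≤ 3 * 2.756 ^ n := by
        gcongr
        exact card_reducedExponents_two_le (by omega)
end

section
/- With q = 3 and x = 2/3, the supremum over θ ∈ R of θx − log((1 + e^θ + e^{2θ})/3) is attained at θ with e^θ = (√33 − 1)/8, and 3·e^{−I(2/3)} < 2.756 where I(2/3) is this supremum. -/
/-!
At `t₀ = e^{θ₀}` the tilted law `t₀^k / (1 + t₀ + t₀²)` on `{0,1,2}` has mean `2/3` exactly when
`4t₀² + t₀ = 2`, i.e. `t₀ = (√33 - 1)/8`. Jensen's inequality for `exp` under this tilted law gives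
`e^{(θ - θ₀)·2/3} ≤ Z(θ)/Z(θ₀)` with `Z(θ) = 1 + e^θ + e^{2θ}`, which is the maximality of `θ₀`. Then
`3 e^{-I(2/3)} = (1 + t₀ + t₀²) / t₀^{2/3}`, and cubing reduces the bound to a polynomial
inequality in `t₀`, which only needs `√33 < 5.745`.
-/

open Real Finset

theorem mul_sub_log_sum_exp_le_of_tilted_mean {ι : Type*} (s : Finset ι) (w v : ι → ℝ)
    (hw : ∀ i ∈ s, 0 ≤ w i) {x θ₀ : ℝ} (hZ : 0 < ∑ i ∈ s, w i * exp (θ₀ * v i))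
    (hmean : ∑ i ∈ s, w i * v i * exp (θ₀ * v i) = x * ∑ i ∈ s, w i * exp (θ₀ * v i))
    (θ : ℝ) :
    θ * x - log (∑ i ∈ s, w i * exp (θ * v i)) ≤
      θ₀ * x - log (∑ i ∈ s, w i * exp (θ₀ * v i)) := by
  set Z₀ := ∑ i ∈ s, w i * exp (θ₀ * v i)
  set Z := ∑ i ∈ s, w i * exp (θ * v i)
  set p : ι → ℝ := fun i => w i * exp (θ₀ * v i) / Z₀
  have hp : ∀ i ∈ s, 0 ≤ p i := fun i hi => by have := hw i hi; positivity
  have hp_sum : ∑ i ∈ s, p i = 1 := by rw [← Finset.sum_div, div_self hZ.ne']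
  have jensen := convexOn_exp.map_sum_le hp hp_sum (p := fun i => (θ - θ₀) * v i)
    (fun _ _ => Set.mem_univ _)
  have h_mean : ∑ i ∈ s, p i • ((θ - θ₀) * v i) = (θ - θ₀) * x := by
    calc ∑ i ∈ s, p i • ((θ - θ₀) * v i)
        = (θ - θ₀) / Z₀ * ∑ i ∈ s, w i * v i * exp (θ₀ * v i) := by
          rw [Finset.mul_sum]
          refine Finset.sum_congr rfl fun i _ => ?_
          simp only [p, smul_eq_mul]
          ring
      _ = (θ - θ₀) * x := by rw [hmean]; field_simp
  have h_ratio : ∑ i ∈ s, p i • exp ((θ - θ₀) * v i) = Z / Z₀ := by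
    simp only [p, smul_eq_mul, Z, Finset.sum_div]
    refine Finset.sum_congr rfl fun i _ => ?_
    rw [div_mul_eq_mul_div, mul_assoc, ← exp_add]
    ring_nf
  rw [h_mean, h_ratio] at jensen
  have hZpos : 0 < Z := (div_pos_iff_of_pos_right hZ).mp ((exp_pos _).trans_le jensen)
  have := (le_log_iff_exp_le (div_pos hZpos hZ)).mpr jensen
  rw [log_div hZpos.ne' hZ.ne'] at this
  linarith

theorem sum_range_three_exp (θ : ℝ) :
    ∑ i ∈ range 3, (1 / 3 : ℝ) * exp (θ * i) = (1 + exp θ + exp (2 * θ)) / 3 := by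
  simp only [Finset.sum_range_succ, Finset.sum_range_zero, Nat.cast_zero, Nat.cast_one,
    Nat.cast_ofNat, mul_zero, mul_one, exp_zero, mul_comm θ 2]
  ring

theorem tilted_mean_range_three {t : ℝ} (ht : 0 < t) (hroot : 4 * t ^ 2 + t = 2) :
    ∑ i ∈ range 3, (1 / 3 : ℝ) * i * exp (log t * i) =
      2 / 3 * ∑ i ∈ range 3, (1 / 3 : ℝ) * exp (log t * i) := by
  simp only [exp_mul, exp_log ht, rpow_natCast, Finset.sum_range_succ, Finset.sum_range_zero]
  push_cast
  linear_combination hroot / 9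

theorem sqrt_thirtyThree_lt : √33 < 5.745 := by
  rw [sqrt_lt' (by norm_num)]; norm_num

theorem cube_one_add_add_sq_lt {t : ℝ} (ht : 0 < t) (ht' : t < 0.5932)
    (hroot : 4 * t ^ 2 + t = 2) : (1 + t + t ^ 2) ^ 3 < 2.756 ^ 3 * t ^ 2 := by
  have e1 : 1 + t + t ^ 2 = 3 * (2 + t) / 4 := by linear_combination hroot / 4
  have e2 : t ^ 2 = (2 - t) / 4 := by linear_combination hroot / 4
  rw [e1, e2]
  nlinarith [mul_pos ht ht]

theorem three_mul_exp_neg_objective (θ : ℝ) :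
    3 * exp (-(θ * (2 / 3) - log ((1 + exp θ + exp (2 * θ)) / 3))) =
      (1 + exp θ + exp (2 * θ)) / exp (θ * (2 / 3)) := by
  rw [neg_sub, exp_sub, exp_log (by positivity)]
  ring

/-- With `q = 3` and `x = 2/3`, the supremum over `θ` of
`θ·(2/3) − log((1 + e^θ + e^{2θ})/3)` is attained at `θ₀` with `e^{θ₀} = (√33 − 1)/8`,
and `3 e^{−I(2/3)} < 2.756`, where `I(2/3)` is this supremum. -/
theorem stmt_18 :
    ∃ θ₀ : ℝ, Real.exp θ₀ = (Real.sqrt 33 - 1) / 8 ∧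
      (∀ θ : ℝ, θ * (2 / 3) - Real.log ((1 + Real.exp θ + Real.exp (2 * θ)) / 3) ≤
        θ₀ * (2 / 3) - Real.log ((1 + Real.exp θ₀ + Real.exp (2 * θ₀)) / 3)) ∧
      3 * Real.exp (-(θ₀ * (2 / 3) -
        Real.log ((1 + Real.exp θ₀ + Real.exp (2 * θ₀)) / 3))) < 2.756 := by
  set t₀ := (√33 - 1) / 8 with ht₀
  have h33 : √33 ^ 2 = 33 := sq_sqrt (by norm_num)
  have ht₀_pos : 0 < t₀ := by nlinarith [sqrt_nonneg 33]
  have ht₀_lt : t₀ < 0.5932 := by linarith [sqrt_thirtyThree_lt]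
  have hroot : 4 * t₀ ^ 2 + t₀ = 2 := by linear_combination h33 / 16
  refine ⟨log t₀, exp_log ht₀_pos, fun θ => ?_, ?_⟩
  · have hZ : 0 < ∑ i ∈ range 3, (1 / 3 : ℝ) * exp (log t₀ * i) := by
      rw [sum_range_three_exp]; positivity
    simpa only [sum_range_three_exp] using
      mul_sub_log_sum_exp_le_of_tilted_mean (range 3) (fun _ => 1 / 3) (fun i => (i : ℝ))
        (fun _ _ => by norm_num) hZ (tilted_mean_range_three ht₀_pos hroot) θ
  · have hsq : exp (2 * log t₀) = t₀ ^ 2 := by rw [mul_comm, exp_mul, exp_log ht₀_pos, rpow_two]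
    have hcube : exp (log t₀ * (2 / 3)) ^ 3 = t₀ ^ 2 := by
      rw [← exp_nat_mul, ← hsq]; push_cast; ring_nf
    rw [three_mul_exp_neg_objective, exp_log ht₀_pos, hsq, div_lt_iff₀ (exp_pos _)]
    refine lt_of_pow_lt_pow_left₀ 3 (by positivity) ?_
    rw [mul_pow, hcube]
    exact cube_one_add_add_sq_lt ht₀_pos ht₀_lt hroot
end
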